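/- arXiv:2408.10381 — 2 statements merged into one kernel-verified Lean document; each statement's English description precedes it below -/
import Mathlib

section
/- Let V : 𝒬×𝒪 → ℝ, fix q ∈ 𝒬, o ∈ 𝒪, a ∈ 𝒜, and set W(q,o,a,o') = Σ_{q'} τ(q'|q, L(o,a,o'))·V(q',o'). Then Var_{o'∼p(·|o,a)} W(q,o,a,o') ≤ Var_{s'∼P(·|s,a)} V(s'), where s = (q,o) and P((q',o')|s,a) = p(o'|o,a)·τ(q'|q, L(o,a,o')). -/
open Finset
open scoped BigOperators

namespace VarLemmaPRM

variable {QT OT AT E : Type*} [Fintype QT] [Fintype OT]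

/-- variance of `w` under the distribution `pr` on a finite type. -/
def varD {ι : Type*} [Fintype ι] (pr : ι → ℝ) (w : ι → ℝ) : ℝ :=
  ∑ i, pr i * (w i - ∑ j, pr j * w j) ^ 2

/-- **Lemma (variance contraction through the PRM).** Let `V : 𝒬×𝒪 → ℝ`, fix `q,o,a`,
and set `W(q,o,a,o') = Σ_{q'} τ(q'|q,L(o,a,o')) V(q',o')`.  Then
`Var_{o'∼p(·|o,a)} W(q,o,a,o') ≤ Var_{s'∼P(·|s,a)} V(s')` for `s = (q,o)`, where
`P((q',o')|s,a) = p(o'|o,a) τ(q'|q,L(o,a,o'))`. -/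
theorem stmt6 (p : OT → AT → OT → ℝ) (tk : QT → E → QT → ℝ)
    (lab : OT → AT → OT → E)
    (hp0 : ∀ o a o', 0 ≤ p o a o') (hp1 : ∀ o a, ∑ o', p o a o' = 1)
    (htk0 : ∀ q e q', 0 ≤ tk q e q') (htk1 : ∀ q e, ∑ q', tk q e q' = 1)
    (V : QT × OT → ℝ) (q : QT) (o : OT) (a : AT) :
    varD (p o a) (fun o' => ∑ q' : QT, tk q (lab o a o') q' * V (q', o')) ≤
      varD (fun s' : QT × OT => p o a s'.2 * tk q (lab o a s'.2) s'.1) V := by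
  set W : OT → ℝ := fun o' => ∑ q' : QT, tk q (lab o a o') q' * V (q', o') with hW
  set μ : ℝ := ∑ s' : QT × OT, (p o a s'.2 * tk q (lab o a s'.2) s'.1) * V s' with hμ
  have hmean : ∑ o', p o a o' * W o' = μ := by
    rw [hμ, Fintype.sum_prod_type, Finset.sum_comm]
    refine Finset.sum_congr rfl fun o' _ => ?_
    rw [hW, Finset.mul_sum]
    refine Finset.sum_congr rfl fun q' _ => ?_
    ring
  rw [varD, varD, hmean, hμ.symm]
  rw [Fintype.sum_prod_type, Finset.sum_comm]
  refine Finset.sum_le_sum fun o' _ => ?_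
  have hsum : ∑ q' : QT, tk q (lab o a o') q' * (V (q', o') - μ)
      = W o' - μ := by
    rw [hW]
    simp only [mul_sub]
    rw [Finset.sum_sub_distrib, ← Finset.sum_mul, htk1, one_mul]
  have hCS : (W o' - μ) ^ 2 ≤ ∑ q' : QT, tk q (lab o a o') q' * (V (q', o') - μ) ^ 2 := by
    rw [← hsum]
    calc (∑ q' : QT, tk q (lab o a o') q' * (V (q', o') - μ)) ^ 2
        = (∑ q' : QT, Real.sqrt (tk q (lab o a o') q') *
            (Real.sqrt (tk q (lab o a o') q') * (V (q', o') - μ))) ^ 2 := by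
          refine congrArg (· ^ 2) (Finset.sum_congr rfl fun q' _ => ?_)
          rw [← mul_assoc, Real.mul_self_sqrt (htk0 _ _ _)]
      _ ≤ (∑ q' : QT, Real.sqrt (tk q (lab o a o') q') ^ 2) *
            ∑ q' : QT, (Real.sqrt (tk q (lab o a o') q') * (V (q', o') - μ)) ^ 2 :=
          Finset.sum_mul_sq_le_sq_mul_sq _ _ _
      _ = ∑ q' : QT, tk q (lab o a o') q' * (V (q', o') - μ) ^ 2 := by
          have h1 : (∑ q' : QT, Real.sqrt (tk q (lab o a o') q') ^ 2) = 1 := by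
            rw [← htk1 q (lab o a o')]
            exact Finset.sum_congr rfl fun q' _ => Real.sq_sqrt (htk0 _ _ _)
          rw [h1, one_mul]
          refine Finset.sum_congr rfl fun q' _ => ?_
          rw [mul_pow, Real.sq_sqrt (htk0 _ _ _)]
  calc p o a o' * (W o' - μ) ^ 2
      ≤ p o a o' * ∑ q' : QT, tk q (lab o a o') q' * (V (q', o') - μ) ^ 2 :=
        mul_le_mul_of_nonneg_left hCS (hp0 _ _ _)
    _ = ∑ q' : QT, p o a o' * tk q (lab o a o') q' * (V (q', o') - μ) ^ 2 := by
        rw [Finset.mul_sum]; exact Finset.sum_congr rfl fun q' _ => by ring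

end VarLemmaPRM
end

section
/- Fix k ∈ [K], h ∈ [H], (o,a) with N_k(o,a) > 0, and q ∈ 𝒬, and suppose the event ℰ holds (in particular, for all z ∈ 𝒪: |p̂_k(z|o,a) − p(z|o,a)| ≤ √(2·p(z|o,a)(1−p(z|o,a))·ι/N_k(o,a)) + 2ι/(3N_k(o,a))). Then for any f : 𝒮 → [0,H] and s = (q,o): |(P̂_k − P)f(s,a)| ≤ (1/H)·Σ_{s'} P(s'|s,a)·f(s') + 5H²Oι/(3N_k(o,a)). -/
/-
Write `W(o') = Σ_{q'} τ(q'|q, L(o,a,o')) f(q',o')`. Since `P̂_k` and `P` share the exact PRM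
factor `τ`, `(P̂_k − P) f (s,a) = Σ_{o'} (p̂_k − p)(o'|o,a) W(o')` with `0 ≤ W ≤ H`. In each term
the Bernstein bound of `ℰ` gives `|p̂_k − p| W ≤ √(2pι/N) W + 2Hι/(3N)`, and AM-GM with `W² ≤ HW`
splits `√(2pι/N) W ≤ pW/H + H²ι/N`. Summing over the `O` observations gives
`(1/H) P f + O (H² + 2H/3) ι/N ≤ (1/H) P f + 5H²Oι/(3N)`.
-/

open Finset Real
open scoped Classical BigOperators

namespace PRMFormal

/-- All the data of one run of `UCBVI-PRM` on a labeled MDP with a probabilistic reward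
machine: the model `(p, τ, L, ν)`, horizon `H`, number of episodes `K`, confidence
parameter `ρ`, the realized trajectory `st`/`ac` (episode, step, 0-indexed), the optimistic
value functions `Vf`, `Qf` and the greedy policies `pol` computed by the algorithm. -/
structure RunData (QT OT AT E : Type*) where
  p : OT → AT → OT → ℝ
  tk : QT → E → QT → ℝ
  lab : OT → AT → OT → E
  nu : QT → E → QT → ℝ
  H : ℕ
  K : ℕ
  rho : ℝ
  st : ℕ → ℕ → QT × OT
  ac : ℕ → ℕ → AT
  Vf : ℕ → ℕ → QT × OT → ℝ
  Qf : ℕ → ℕ → QT × OT → AT → ℝ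
  pol : ℕ → (QT × OT) → ℕ → AT

namespace RunData

variable {QT OT AT E : Type*} [Fintype QT] [Fintype OT] [Fintype AT]
  [Nonempty QT] [Nonempty OT] [Nonempty AT]

/-- Finite-horizon value iteration for a fixed (Markov, deterministic) policy:
`polValAux P R pi n h s` is the expected sum of the `n` rewards collected from step `h`
on, starting at `s`, under transition kernel `P` and reward `R`. -/
def polValAux (P : (QT × OT) → AT → (QT × OT) → ℝ) (R : (QT × OT) → AT → ℝ)
    (pi : (QT × OT) → ℕ → AT) : ℕ → ℕ → (QT × OT) → ℝ
  | 0, _, _ => 0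
  | n + 1, h, s =>
      R s (pi s h) + ∑ s' : QT × OT, P s (pi s h) s' * polValAux P R pi n (h + 1) s'

variable (D : RunData QT OT AT E)

def Onum (_D : RunData QT OT AT E) : ℕ := Fintype.card OT
def Anum (_D : RunData QT OT AT E) : ℕ := Fintype.card AT
def Qnum (_D : RunData QT OT AT E) : ℕ := Fintype.card QT
/-- total number of time steps `T = KH`. -/
def T : ℕ := D.K * D.H
/-- number of time steps before episode `k` (0-indexed): `T_k = Hk`. -/
def Tk (k : ℕ) : ℕ := D.H * k

noncomputable def iota : ℝ :=
  Real.log (6 * D.Qnum * D.Onum * D.Anum * D.T / D.rho)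

/-- cross-product transition `P((q',o')|(q,o),a) = p(o'|o,a) τ(q'|q,L(o,a,o'))`. -/
def Pker : (QT × OT) → AT → (QT × OT) → ℝ :=
  fun s a s' => D.p s.2 a s'.2 * D.tk s.1 (D.lab s.2 a s'.2) s'.1

/-- cross-product (expected) reward. -/
def Rrew : (QT × OT) → AT → ℝ :=
  fun s a => ∑ s' : QT × OT, D.Pker s a s' * D.nu s.1 (D.lab s.2 a s'.2) s'.1

/-- `N_k(o,a)`: number of visits to `(o,a)` before episode `k`. -/
noncomputable def Nc (k : ℕ) (o : OT) (a : AT) : ℕ :=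
  ∑ i ∈ range k, ∑ h ∈ range D.H, if (D.st i h).2 = o ∧ D.ac i h = a then 1 else 0

/-- `N_k(o,a,z)`. -/
noncomputable def Nc3 (k : ℕ) (o : OT) (a : AT) (z : OT) : ℕ :=
  ∑ i ∈ range k, ∑ h ∈ range D.H,
    if (D.st i h).2 = o ∧ D.ac i h = a ∧ (D.st i (h + 1)).2 = z then 1 else 0

/-- `N'_{k,h}(o)`: number of visits to observation `o` at step `h` before episode `k`. -/
noncomputable def Nstep (k h : ℕ) (o : OT) : ℕ :=
  ∑ i ∈ range k, if (D.st i h).2 = o then 1 else 0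

/-- empirical transition `p̂_k(z|o,a)`. -/
noncomputable def phat (k : ℕ) (o : OT) (a : AT) (z : OT) : ℝ :=
  (D.Nc3 k o a z : ℝ) / (D.Nc k o a : ℝ)

/-- empirical cross-product transition `P̂_k`. -/
noncomputable def Phat (k : ℕ) : (QT × OT) → AT → (QT × OT) → ℝ :=
  fun s a s' => D.phat k s.2 a s'.2 * D.tk s.1 (D.lab s.2 a s'.2) s'.1

/-- empirical cross-product reward `R̂_k`. -/
noncomputable def Rhat (k : ℕ) : (QT × OT) → AT → ℝ :=
  fun s a => ∑ s' : QT × OT, D.Phat k s a s' * D.nu s.1 (D.lab s.2 a s'.2) s'.1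

/-- `W(q,o,a,o') = Σ_{q'} τ(q'|q,L(o,a,o')) V(q',o')` for a value function `V`. -/
def Wof (V : QT × OT → ℝ) (q : QT) (o : OT) (a : AT) (o' : OT) : ℝ :=
  ∑ q' : QT, D.tk q (D.lab o a o') q' * V (q', o')

/-- variance of `w` under the (sub)distribution `pr` over next observations. -/
def varD (_D : RunData QT OT AT E) (pr : OT → ℝ) (w : OT → ℝ) : ℝ :=
  ∑ o', pr o' * (w o' - ∑ z, pr z * w z) ^ 2

/-- value function of policy `pi` in the true cross-product MDP (`V_h^π`, 0-indexed,
`Vpol pi H = 0`). -/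
noncomputable def Vpol (pi : (QT × OT) → ℕ → AT) (h : ℕ) (s : QT × OT) : ℝ :=
  polValAux D.Pker D.Rrew pi (D.H - h) h s

/-- optimal value function `V_h^*`. -/
noncomputable def Vstar (h : ℕ) (s : QT × OT) : ℝ :=
  ⨆ pi : (QT × OT) → ℕ → AT, D.Vpol pi h s

/-- the Bernstein-type exploration bonus `b_{k,h}(s,a)` of Algorithm 2. -/
noncomputable def bonusB (k h : ℕ) (s : QT × OT) (a : AT) : ℝ :=
  Real.sqrt (8 * D.iota * D.varD (D.phat k s.2 a) (D.Wof (D.Vf k (h + 1)) s.1 s.2 a)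
      / (D.Nc k s.2 a : ℝ))
    + 14 * D.H * D.iota / (3 * (D.Nc k s.2 a : ℝ))
    + Real.sqrt (2 * D.iota / (D.Nc k s.2 a : ℝ))
    + Real.sqrt ((8 / (D.Nc k s.2 a : ℝ)) * ∑ o' : OT, D.phat k s.2 a o' *
        min (100 ^ 2 * (D.H : ℝ) ^ 3 * (D.Onum : ℝ) ^ 2 * (D.Anum : ℝ) * D.iota ^ 2
              / (D.Nstep k (h + 1) o' : ℝ)) ((D.H : ℝ) ^ 2))

/-- the defining properties of a run of `UCBVI-PRM` (model validity, initialization,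
value iteration with bonus, greediness, and consistency of played actions). -/
def IsUCBVIRun : Prop :=
  (∀ o a o', 0 ≤ D.p o a o') ∧ (∀ o a, ∑ o', D.p o a o' = 1) ∧
  (∀ q e q', 0 ≤ D.tk q e q') ∧ (∀ q e, ∑ q', D.tk q e q' = 1) ∧
  (∀ q e q', D.nu q e q' ∈ Set.Icc (0 : ℝ) 1) ∧
  0 < D.rho ∧ D.rho < 1 ∧ 0 < D.H ∧
  (∀ h s a, D.Qf 0 h s a = D.H) ∧
  (∀ k s a, D.Qf k D.H s a = 0) ∧
  (∀ k s, D.Vf k D.H s = 0) ∧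
  (∀ k h s a, h < D.H →
    D.Qf (k + 1) h s a =
      if 0 < D.Nc (k + 1) s.2 a then
        min (D.Qf k h s a) (min (D.H : ℝ)
          (D.Rhat (k + 1) s a + (∑ s' : QT × OT, D.Phat (k + 1) s a s' * D.Vf (k + 1) (h + 1) s')
            + D.bonusB (k + 1) h s a))
      else (D.H : ℝ)) ∧
  (∀ k h s, D.Vf k h s = ⨆ a, D.Qf k h s a) ∧
  (∀ k s h, D.Qf k h s (D.pol k s h) = ⨆ a, D.Qf k h s a) ∧
  (∀ k h, D.ac k h = D.pol k (D.st k h) h)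

/-- `e_{i,j} = ((P̂_i − P) V^*_{j+1})(s_{i,j}, a_{i,j})`. -/
noncomputable def eErr (i j : ℕ) : ℝ :=
  ∑ s' : QT × OT,
    (D.Phat i (D.st i j) (D.ac i j) s' - D.Pker (D.st i j) (D.ac i j) s') * D.Vstar (j + 1) s'

/-- `ē_{i,j} = (R̂_i − R)(s_{i,j}, a_{i,j})`. -/
noncomputable def rErr (i j : ℕ) : ℝ :=
  D.Rhat i (D.st i j) (D.ac i j) - D.Rrew (D.st i j) (D.ac i j)

/-- `ξ_{i,j} = 5H²Oι/(3N_i(o_{i,j},a_{i,j}))`. -/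
noncomputable def xiQ (i j : ℕ) : ℝ :=
  5 * (D.H : ℝ) ^ 2 * (D.Onum : ℝ) * D.iota / (3 * (D.Nc i (D.st i j).2 (D.ac i j) : ℝ))

/-- the bonus along the trajectory. -/
noncomputable def bTerm (i j : ℕ) : ℝ := D.bonusB i j (D.st i j) (D.ac i j)

/-- `δ̃_{i,j} = V_{i,j}(s_{i,j}) − V_j^{π_i}(s_{i,j})`. -/
noncomputable def tdelta (i j : ℕ) : ℝ :=
  D.Vf i j (D.st i j) - D.Vpol (D.pol i) j (D.st i j)

/-- `δ_{i,j} = V_j^*(s_{i,j}) − V_j^{π_i}(s_{i,j})`. -/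
noncomputable def delta (i j : ℕ) : ℝ :=
  D.Vstar j (D.st i j) - D.Vpol (D.pol i) j (D.st i j)

/-- martingale difference `ε_{i,j} = (P Δ̃_{i,j+1})(s_{i,j},a_{i,j}) − δ̃_{i,j+1}`. -/
noncomputable def epsM (i j : ℕ) : ℝ :=
  (∑ s' : QT × OT, D.Pker (D.st i j) (D.ac i j) s' *
      (D.Vf i (j + 1) s' - D.Vpol (D.pol i) (j + 1) s'))
    - (D.Vf i (j + 1) (D.st i (j + 1)) - D.Vpol (D.pol i) (j + 1) (D.st i (j + 1)))

/-- `U_{k,h}`. -/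
noncomputable def Uq (k h : ℕ) : ℝ :=
  Real.exp 1 * ∑ i ∈ range k, ∑ j ∈ Ico h D.H,
      (D.bTerm i j + D.eErr i j + D.rErr i j + D.xiQ i j)
    + D.H * Real.sqrt (D.Tk k * D.iota)

/-- state-restricted `U_{k,h,s}`. -/
noncomputable def Uqs (k h : ℕ) (s : QT × OT) : ℝ :=
  Real.exp 1 * ∑ i ∈ range k,
      (if D.st i h = s then
        ∑ j ∈ Ico h D.H, (D.bTerm i j + D.eErr i j + D.rErr i j + D.xiQ i j) else 0)
    + D.H * Real.sqrt (D.H * (D.Nstep k h s.2 : ℝ) * D.iota)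

/-- `W_h^*`. -/
noncomputable def Wstar (h : ℕ) (q : QT) (o : OT) (a : AT) (o' : OT) : ℝ :=
  D.Wof (D.Vstar h) q o a o'

/-- `𝕎_h^*(q,o,a)`. -/
noncomputable def VarWstar (h : ℕ) (q : QT) (o : OT) (a : AT) : ℝ :=
  D.varD (D.p o a) (D.Wstar h q o a)

/-- `𝕎̂_{k,h}^*(q,o,a)`. -/
noncomputable def VarWstarHat (k h : ℕ) (q : QT) (o : OT) (a : AT) : ℝ :=
  D.varD (D.phat k o a) (D.Wstar h q o a)

/-- `𝕎_h^π(q,o,a)`. -/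
noncomputable def VarWpol (pi : (QT × OT) → ℕ → AT) (h : ℕ) (q : QT) (o : OT) (a : AT) : ℝ :=
  D.varD (D.p o a) (D.Wof (D.Vpol pi h) q o a)

/-- `𝕎̂_{k,h}(q,o,a)`. -/
noncomputable def VarWhat (k h : ℕ) (q : QT) (o : OT) (a : AT) : ℝ :=
  D.varD (D.phat k o a) (D.Wof (D.Vf k h) q o a)

/-- `𝕎^{π_i}_{i,j+1}` along the trajectory. -/
noncomputable def WvarPolStep (i j : ℕ) : ℝ :=
  D.VarWpol (D.pol i) (j + 1) (D.st i j).1 (D.st i j).2 (D.ac i j)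

/-- `𝕎^*_{i,j+1}` along the trajectory. -/
noncomputable def WvarStarStep (i j : ℕ) : ℝ :=
  D.VarWstar (j + 1) (D.st i j).1 (D.st i j).2 (D.ac i j)

/-- `𝕎̂_{i,j+1}` along the trajectory. -/
noncomputable def WvarHatStep (i j : ℕ) : ℝ :=
  D.VarWhat i (j + 1) (D.st i j).1 (D.st i j).2 (D.ac i j)

noncomputable def c1 (v u n : ℝ) : ℝ := 2 * Real.sqrt (v * D.iota / n) + 14 * u * D.iota / (3 * n)
noncomputable def c2 (pr n : ℝ) : ℝ :=
  Real.sqrt (2 * pr * (1 - pr) * D.iota / n) + 2 * D.iota / (3 * n)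
noncomputable def c3 (n : ℝ) : ℝ := 2 * Real.sqrt ((D.Onum : ℝ) * D.iota / n)
noncomputable def c4 (u n : ℝ) : ℝ := u * Real.sqrt (D.iota / n)

/-- `b'_{i,j}(o) = min(100²H³O²Aι²/N'_{i,j}(o), H²)`. -/
noncomputable def bprime (i j : ℕ) (o : OT) : ℝ :=
  min (100 ^ 2 * (D.H : ℝ) ^ 3 * (D.Onum : ℝ) ^ 2 * (D.Anum : ℝ) * D.iota ^ 2
        / (D.Nstep i j o : ℝ)) ((D.H : ℝ) ^ 2)

/-- The high-probability event `ℰ`: all Bernstein-, Azuma- and Freedman-type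
concentration inequalities of the analysis hold simultaneously for the realized run. -/
def EventE : Prop :=
  (∀ k ≤ D.K, ∀ h < D.H, ∀ (q : QT) (o : OT) (a : AT), 0 < D.Nc k o a →
    (|∑ o', (D.phat k o a o' - D.p o a o') * D.Wstar h q o a o'| ≤
        min (D.c1 (D.VarWstar h q o a) D.H (D.Nc k o a))
            (D.c1 (D.VarWstarHat k h q o a) D.H (D.Nc k o a))) ∧
    (∀ z, |D.phat k o a z - D.p o a z| ≤ D.c2 (D.p o a z) (D.Nc k o a)) ∧
    (∑ z, |D.phat k o a z - D.p o a z| ≤ D.c3 (D.Nc k o a)) ∧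
    (|∑ o', (D.phat k o a o' - D.p o a o') *
        (∑ q', D.tk q (D.lab o a o') q' * D.nu q (D.lab o a o') q')| ≤
      D.c4 1 (D.Nc k o a))) ∧
  (∀ k ≤ D.K, ∀ h < D.H,
    ∑ i ∈ range k, ∑ j ∈ Ico h D.H, D.epsM i j ≤
      2 * Real.sqrt ((k : ℝ) * ((D.H : ℝ) - h) * (D.H : ℝ) ^ 2 * D.iota)) ∧
  (∀ k ≤ D.K, ∀ h < D.H, ∀ s : QT × OT,
    ∑ i ∈ range k, (if D.st i h = s then ∑ j ∈ Ico h D.H, D.epsM i j else 0) ≤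
      2 * Real.sqrt ((D.Nstep k h s.2 : ℝ) * ((D.H : ℝ) - h) * (D.H : ℝ) ^ 2 * D.iota)) ∧
  (∀ k ≤ D.K, ∀ h < D.H,
    ∑ i ∈ range k, ∑ j ∈ Ico h D.H, D.WvarPolStep i j ≤
      (D.Tk k : ℝ) * D.H + 2 * Real.sqrt ((D.H : ℝ) ^ 4 * (D.Tk k : ℝ) * D.iota)
        + 4 * (D.H : ℝ) ^ 3 * D.iota / 3) ∧
  (∀ k ≤ D.K, ∀ h < D.H, ∀ s : QT × OT,
    ∑ i ∈ range k, (if D.st i h = s then ∑ j ∈ Ico h D.H, D.WvarPolStep i j else 0) ≤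
      (D.Nstep k h s.2 : ℝ) * (D.H : ℝ) ^ 2
        + 2 * Real.sqrt ((D.H : ℝ) ^ 5 * (D.Nstep k h s.2 : ℝ) * D.iota)
        + 4 * (D.H : ℝ) ^ 3 * D.iota / 3) ∧
  (∀ k ≤ D.K, ∀ h < D.H,
    ∑ i ∈ range k, ∑ j ∈ Ico h D.H,
        ((∑ z, D.p (D.st i j).2 (D.ac i j) z * D.bprime i (j + 1) z)
          - D.bprime i (j + 1) (D.st i (j + 1)).2) ≤
      2 * Real.sqrt ((k : ℝ) * ((D.H : ℝ) - h) * (D.H : ℝ) ^ 4 * D.iota)) ∧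
  (∀ k ≤ D.K, ∀ h < D.H, ∀ s : QT × OT,
    ∑ i ∈ range k, (if D.st i h = s then
        ∑ j ∈ Ico h D.H,
          ((∑ z, D.p (D.st i j).2 (D.ac i j) z * D.bprime i (j + 1) z)
            - D.bprime i (j + 1) (D.st i (j + 1)).2) else 0) ≤
      2 * Real.sqrt ((D.Nstep k h s.2 : ℝ) * ((D.H : ℝ) - h) * (D.H : ℝ) ^ 4 * D.iota))

/-- The event `Ω_{k,h}`: every optimistic value function computed before step `h` of
episode `k` upper-bounds the optimal value function. -/
def OmegaEv (k h : ℕ) : Prop :=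
  ∀ i < D.K, ∀ j ≤ D.H, (i < k ∨ (i = k ∧ h < j)) →
    ∀ s : QT × OT, D.Vstar j s ≤ D.Vf i j s

/-- typical episodes `[k]_typ`. -/
def typEp (k i : ℕ) : Prop :=
  (∀ h < D.H, D.H ≤ D.Nc k (D.st i h).2 (D.ac i h) ∧ D.H ≤ D.Nstep k h (D.st i h).2) ∧
  650 * (D.H : ℝ) * (D.Onum : ℝ) ^ 2 * (D.Anum : ℝ) ^ 2 * D.iota ≤ (i : ℝ)

/-- `C_{k,h}`. -/
noncomputable def Cq (k h : ℕ) : ℝ :=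
  ∑ i ∈ range k, if D.typEp k i then ∑ j ∈ Ico h D.H, D.eErr i j else 0

/-- `C_{k,h,s}`. -/
noncomputable def Cqs (k h : ℕ) (s : QT × OT) : ℝ :=
  ∑ i ∈ range k, if D.typEp k i ∧ D.st i h = s then ∑ j ∈ Ico h D.H, D.eErr i j else 0

/-- `B_{k,h}`. -/
noncomputable def Bq (k h : ℕ) : ℝ :=
  ∑ i ∈ range k, if D.typEp k i then ∑ j ∈ Ico h D.H, D.bTerm i j else 0

/-- `B_{k,h,s}`. -/
noncomputable def Bqs (k h : ℕ) (s : QT × OT) : ℝ :=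
  ∑ i ∈ range k, if D.typEp k i ∧ D.st i h = s then ∑ j ∈ Ico h D.H, D.bTerm i j else 0

end RunData

end PRMFormal

namespace PRMFormal

section Bernstein

variable {p ι N H w d : ℝ}

/- With `ι < 0` the square root vanishes and the second term is negative. -/
lemma nonneg_of_abs_le_bernstein (hp0 : 0 ≤ p) (hp1 : p ≤ 1) (hN : 0 < N)
    (hd : |d| ≤ √(2 * p * (1 - p) * ι / N) + 2 * ι / (3 * N)) : 0 ≤ ι := by
  by_contra! hι
  have hrad : 2 * p * (1 - p) * ι / N ≤ 0 :=
    div_nonpos_of_nonpos_of_nonneg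
      (mul_nonpos_of_nonneg_of_nonpos
        (mul_nonneg (mul_nonneg zero_le_two hp0) (sub_nonneg.mpr hp1)) hι.le) hN.le
  have hlin : 2 * ι / (3 * N) < 0 := div_neg_of_neg_of_pos (by linarith) (by positivity)
  rw [Real.sqrt_eq_zero'.mpr hrad] at hd
  linarith [abs_nonneg d]

/- AM-GM with the weights `p w / H` and `H² ι / N`, using `w² ≤ H w`. -/
lemma sqrt_bernstein_mul_le (hp0 : 0 ≤ p) (hι : 0 ≤ ι) (hN : 0 < N)
    (hH : 0 < H) (hw0 : 0 ≤ w) (hwH : w ≤ H) :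
    √(2 * p * (1 - p) * ι / N) * w ≤ p * w / H + H ^ 2 * ι / N := by
  set A := p * w / H
  set B := H ^ 2 * ι / N
  have hA : 0 ≤ A := by positivity
  have hB : 0 ≤ B := by positivity
  have hAB : 2 * p * (1 - p) * ι / N * w ^ 2 ≤ 2 * (A * B) := by
    have hprod : A * B = p * w * H * ι / N := by
      simp only [A, B]; field_simp
    rw [hprod, div_mul_eq_mul_div, ← mul_div_assoc, div_le_div_iff_of_pos_right hN]
    have : 0 ≤ p * ι * w * (H - (1 - p) * w) :=
      mul_nonneg (by positivity) (by nlinarith)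
    nlinarith
  rw [← Real.sqrt_sq hw0, ← Real.sqrt_mul' _ (sq_nonneg w)]
  exact Real.sqrt_le_left (by positivity) |>.mpr (by nlinarith [sq_nonneg (A - B)])

lemma abs_mul_le_of_abs_le_bernstein (hp0 : 0 ≤ p) (hι : 0 ≤ ι) (hN : 0 < N)
    (hH : 0 < H) (hw0 : 0 ≤ w) (hwH : w ≤ H)
    (hd : |d| ≤ √(2 * p * (1 - p) * ι / N) + 2 * ι / (3 * N)) :
    |d| * w ≤ p * w / H + (H ^ 2 * ι / N + 2 * H * ι / (3 * N)) := by
  have hlin : 2 * ι / (3 * N) * w ≤ 2 * H * ι / (3 * N) := by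
    rw [mul_comm, ← mul_div_assoc, ← mul_assoc, mul_comm w]
    gcongr
  calc |d| * w ≤ (√(2 * p * (1 - p) * ι / N) + 2 * ι / (3 * N)) * w :=
        mul_le_mul_of_nonneg_right hd hw0
    _ = √(2 * p * (1 - p) * ι / N) * w + 2 * ι / (3 * N) * w := add_mul _ _ _
    _ ≤ p * w / H + (H ^ 2 * ι / N + 2 * H * ι / (3 * N)) := by
        linarith [sqrt_bernstein_mul_le hp0 hι hN hH hw0 hwH]

end Bernstein

lemma abs_sum_mul_le_sum_add_card_mul {α : Type*} (s : Finset α) (g w a : α → ℝ) (c : ℝ)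
    (hw : ∀ i ∈ s, 0 ≤ w i) (h : ∀ i ∈ s, |g i| * w i ≤ a i + c) :
    |∑ i ∈ s, g i * w i| ≤ ∑ i ∈ s, a i + #s * c :=
  calc |∑ i ∈ s, g i * w i| ≤ ∑ i ∈ s, |g i| * w i := by
        refine (abs_sum_le_sum_abs _ _).trans_eq (sum_congr rfl fun i hi => ?_)
        rw [abs_mul, abs_of_nonneg (hw i hi)]
    _ ≤ ∑ i ∈ s, (a i + c) := sum_le_sum h
    _ = ∑ i ∈ s, a i + #s * c := by rw [sum_add_distrib, sum_const, nsmul_eq_mul]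

namespace RunData

variable {QT OT AT E : Type*} [Fintype QT]

lemma Wof_nonneg {D : RunData QT OT AT E} (htk0 : ∀ q e q', 0 ≤ D.tk q e q')
    {V : QT × OT → ℝ} (hV : ∀ s, 0 ≤ V s) (q : QT) (o : OT) (a : AT) (o' : OT) :
    0 ≤ D.Wof V q o a o' :=
  sum_nonneg fun _ _ => mul_nonneg (htk0 _ _ _) (hV _)

lemma Wof_le {D : RunData QT OT AT E} (htk0 : ∀ q e q', 0 ≤ D.tk q e q')
    (htk1 : ∀ q e, ∑ q', D.tk q e q' = 1) {V : QT × OT → ℝ} {c : ℝ} (hV : ∀ s, V s ≤ c)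
    (q : QT) (o : OT) (a : AT) (o' : OT) : D.Wof V q o a o' ≤ c :=
  calc D.Wof V q o a o' ≤ ∑ q', D.tk q (D.lab o a o') q' * c :=
        sum_le_sum fun _ _ => mul_le_mul_of_nonneg_left (hV _) (htk0 _ _ _)
    _ = c := by rw [← sum_mul, htk1, one_mul]

variable [Fintype OT] (D : RunData QT OT AT E)

lemma sum_mul_tk_mul_eq_sum_mul_Wof (g : OT → ℝ) (V : QT × OT → ℝ) (q : QT) (o : OT)
    (a : AT) :
    ∑ s' : QT × OT, g s'.2 * D.tk q (D.lab o a s'.2) s'.1 * V s' =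
      ∑ o', g o' * D.Wof V q o a o' := by
  rw [Fintype.sum_prod_type_right]
  simp only [Wof, mul_sum, mul_assoc]

lemma sum_Phat_sub_Pker_mul (k : ℕ) (V : QT × OT → ℝ) (q : QT) (o : OT) (a : AT) :
    ∑ s' : QT × OT, (D.Phat k (q, o) a s' - D.Pker (q, o) a s') * V s' =
      ∑ o', (D.phat k o a o' - D.p o a o') * D.Wof V q o a o' := by
  simp only [Phat, Pker, ← sub_mul]
  exact D.sum_mul_tk_mul_eq_sum_mul_Wof (fun o' => D.phat k o a o' - D.p o a o') V q o a

lemma sum_Pker_mul (V : QT × OT → ℝ) (q : QT) (o : OT) (a : AT) :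
    ∑ s' : QT × OT, D.Pker (q, o) a s' * V s' = ∑ o', D.p o a o' * D.Wof V q o a o' :=
  D.sum_mul_tk_mul_eq_sum_mul_Wof (D.p o a) V q o a

end RunData

open RunData

theorem stmt7_general {QT OT AT E : Type*} [Fintype QT] [Fintype OT] [Fintype AT]
    (D : RunData QT OT AT E) (hrun : D.IsUCBVIRun) (hE : D.EventE)
    (k h : ℕ) (hk : k ≤ D.K) (hh : h < D.H)
    (q : QT) (o : OT) (a : AT) (hN : 0 < D.Nc k o a)
    (f : QT × OT → ℝ) (hf0 : ∀ s', 0 ≤ f s') (hfH : ∀ s', f s' ≤ D.H) :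
    |∑ s' : QT × OT, (D.Phat k (q, o) a s' - D.Pker (q, o) a s') * f s'| ≤
      (∑ s' : QT × OT, D.Pker (q, o) a s' * f s') / (D.H : ℝ)
        + 5 * (D.H : ℝ) ^ 2 * (D.Onum : ℝ) * D.iota / (3 * (D.Nc k o a : ℝ)) := by
  obtain ⟨hp0, hp1, htk0, htk1, -, -, -, hH, -⟩ := hrun
  set N : ℝ := (D.Nc k o a : ℝ)
  have hNpos : 0 < N := Nat.cast_pos.mpr hN
  have hHpos : (0 : ℝ) < D.H := Nat.cast_pos.mpr hH
  have hp_le_one : ∀ z, D.p o a z ≤ 1 := fun z =>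
    (single_le_sum (fun z _ => hp0 o a z) (mem_univ z)).trans_eq (hp1 o a)
  have hbern := (hE.1 k hk h hh q o a hN).2.1
  have hι := nonneg_of_abs_le_bernstein (hp0 o a o) (hp_le_one o) hNpos (hbern o)
  have hslack : (D.Onum : ℝ) * (D.H ^ 2 * D.iota / N + 2 * D.H * D.iota / (3 * N)) ≤
      5 * (D.H : ℝ) ^ 2 * D.Onum * D.iota / (3 * N) := by
    have hH1 : (1 : ℝ) ≤ D.H := Nat.one_le_cast.mpr hH
    rw [mul_add, ← sub_nonneg]
    field_simp
    nlinarith [mul_nonneg (mul_nonneg (Nat.cast_nonneg D.Onum) hι) (sub_nonneg.mpr hH1)]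
  have hW0 := Wof_nonneg htk0 hf0 q o a
  have hWH := Wof_le htk0 htk1 hfH q o a
  rw [sum_Phat_sub_Pker_mul, sum_Pker_mul, sum_div]
  refine (abs_sum_mul_le_sum_add_card_mul univ _ _ _ _ (fun o' _ => hW0 o') fun o' _ =>
    abs_mul_le_of_abs_le_bernstein (hp0 o a o') hι hNpos hHpos (hW0 o') (hWH o')
      (hbern o')).trans ?_
  rw [card_univ]
  exact add_le_add le_rfl hslack

/-- **Lemma (model error under a bounded function).** Fix `k ∈ [K]`, `h ∈ [H]`, `(o,a)`
with `N_k(o,a) > 0` and `q`, and suppose `ℰ` holds (in particular, the Bernstein bound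
`|p̂_k(z|o,a) − p(z|o,a)| ≤ √(2p(z|o,a)(1−p(z|o,a))ι/N_k(o,a)) + 2ι/(3N_k(o,a))` for all
`z`, which is part of `ℰ`). Then for every `f : 𝒮 → [0,H]` and `s = (q,o)`,
`|(P̂_k − P)f(s,a)| ≤ (1/H)·Σ_{s'} P(s'|s,a) f(s') + 5H²Oι/(3N_k(o,a))`. -/
theorem stmt7 {QT OT AT E : Type*} [Fintype QT] [Fintype OT] [Fintype AT]
    [Nonempty QT] [Nonempty OT] [Nonempty AT]
    (D : RunData QT OT AT E) (hrun : D.IsUCBVIRun) (hE : D.EventE)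
    (k h : ℕ) (hk : k ≤ D.K) (hh : h < D.H)
    (q : QT) (o : OT) (a : AT) (hN : 0 < D.Nc k o a)
    (f : QT × OT → ℝ) (hf0 : ∀ s', 0 ≤ f s') (hfH : ∀ s', f s' ≤ D.H) :
    |∑ s' : QT × OT, (D.Phat k (q, o) a s' - D.Pker (q, o) a s') * f s'| ≤
      (∑ s' : QT × OT, D.Pker (q, o) a s' * f s') / (D.H : ℝ)
        + 5 * (D.H : ℝ) ^ 2 * (D.Onum : ℝ) * D.iota / (3 * (D.Nc k o a : ℝ)) :=
  stmt7_general D hrun hE k h hk hh q o a hN f hf0 hfH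
end PRMFormal
end
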